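/- As formal power series, for 1 ≤ i ≤ k: (1/(q)_∞) ∑_{r∈ℤ} (-1)^r q^{r((2k+1)r+2k-2i+1)/2} = ∑_{n₁ ≥ ⋯ ≥ n_{k-1} ≥ 0} q^{n₁²+⋯+n_{k-1}² + n_i+⋯+n_{k-1}} / ((q)_{n₁-n₂} ⋯ (q)_{n_{k-2}-n_{k-1}} (q)_{n_{k-1}}). -/

import Mathlib

/-!
The multisum is the `β`-sequence of a Bailey chain. Start from the Bailey pair
`β_M = 1/(q)_M`, `α_r = (-1)^r q^{r(3r+1)/2}` and apply the Bailey lemma `k - 1` times: `k - i`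
times relative to `a = q` (these steps produce the linear terms `n_i + ⋯ + n_{k-1}`), then, after
turning the pair into one relative to `a = 1`, `i - 1` times relative to `a = 1`. Each step
multiplies `α_r` by `q^{r²}` resp. `q^{r² + r}`, so at the end
`α_r = (-1)^r q^{i r² + (2k - 2i + 1) r(r+1)/2}`, the summand of the theorem. The Bailey lemma
itself is a terminating `q`-Chu–Vandermonde sum.

The limit `M → ∞` is taken modulo `q^{d+1}`: at `M = 2d`, every `1/(q)_{M ± r}` with `|r| ≤ d`
and every `1/(q)_{M - n₁}` with `n₁ ≤ d` is congruent to `1/(q)_d`, while larger `|r|` or `n₁`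
only contribute in degrees above `d`.
-/

open PowerSeries Finset

/-- `∏_{j=1}^m (1 - q^{a j})`, the q-Pochhammer `(q^a; q^a)_m` as a power series in `q = X`. -/
noncomputable def qpochA (a m : ℕ) : PowerSeries ℚ :=
  ∏ j ∈ Finset.range m, (1 - (PowerSeries.X : PowerSeries ℚ) ^ (a * (j + 1)))

/-- `(q)_m = ∏_{j=1}^m (1 - q^j)`. -/
noncomputable def qpoch (m : ℕ) : PowerSeries ℚ := qpochA 1 m

/-- Gaussian binomial `[N choose M]_{q^a}`: `(q^a)_N / ((q^a)_M (q^a)_{N-M})` when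
`0 ≤ M ≤ N`, and `0` otherwise. -/
noncomputable def qbinomA (a : ℕ) (N M : ℤ) : PowerSeries ℚ :=
  if 0 ≤ M ∧ M ≤ N then
    qpochA a N.toNat * (qpochA a M.toNat)⁻¹ * (qpochA a (N - M).toNat)⁻¹
  else 0

/-- Gaussian binomial `[N choose M]_q`. -/
noncomputable def qbinom (N M : ℤ) : PowerSeries ℚ := qbinomA 1 N M

lemma qpoch_succ (m : ℕ) : qpoch (m + 1) = qpoch m * (1 - X ^ (m + 1)) := by
  simp [qpoch, qpochA, prod_range_succ]

lemma constantCoeff_qpoch (m : ℕ) : constantCoeff (qpoch m) = 1 := by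
  simp [qpoch, qpochA, map_prod]

lemma qpoch_mul_inv (m : ℕ) : qpoch m * (qpoch m)⁻¹ = 1 :=
  PowerSeries.mul_inv_cancel _ (by simp [constantCoeff_qpoch])

noncomputable def Xpow (n : ℤ) : ℚ⟦X⟧ := X ^ n.toNat

lemma Xpow_natCast (n : ℕ) : Xpow n = X ^ n := by simp [Xpow]

lemma Xpow_add {a b : ℤ} (ha : 0 ≤ a) (hb : 0 ≤ b) : Xpow (a + b) = Xpow a * Xpow b := by
  rw [Xpow, Xpow, Xpow, ← pow_add, Int.toNat_add ha hb]

/-- `1/(q)_n`, extended by `0` to `n < 0`. Then `(1 - q^n)/(q)_n = 1/(q)_{n-1}` holds for every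
`n : ℤ` (with `Xpow n = 1` for `n ≤ 0`), and the boundary terms of the sums below vanish on their
own. -/
noncomputable def qpochInv (n : ℤ) : ℚ⟦X⟧ := if 0 ≤ n then (qpoch n.toNat)⁻¹ else 0

lemma qpochInv_of_neg {n : ℤ} (hn : n < 0) : qpochInv n = 0 := if_neg (by omega)

lemma qpochInv_natCast (n : ℕ) : qpochInv n = (qpoch n)⁻¹ := by simp [qpochInv]

lemma qpoch_mul_qpochInv (n : ℕ) : qpoch n * qpochInv n = 1 := by
  rw [qpochInv_natCast, qpoch_mul_inv]

lemma one_sub_Xpow_mul_qpochInv (n : ℤ) : (1 - Xpow n) * qpochInv n = qpochInv (n - 1) := by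
  obtain ⟨m, rfl | rfl⟩ := n.eq_nat_or_neg
  · cases m with
    | zero => simp [Xpow, qpochInv_of_neg]
    | succ m =>
      have h1 : constantCoeff (1 - X ^ (m + 1) : ℚ⟦X⟧) ≠ 0 := by simp
      rw [Xpow_natCast, qpochInv_natCast, qpoch_succ, PowerSeries.mul_inv_rev, ← mul_assoc,
        PowerSeries.mul_inv_cancel _ h1, one_mul, ← qpochInv_natCast]
      push_cast; ring_nf
  · rcases Nat.eq_zero_or_pos m with rfl | hm
    · simp [Xpow, qpochInv_of_neg]
    · rw [qpochInv_of_neg (by omega), qpochInv_of_neg (by omega), mul_zero]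

/-- The `q`-Pascal rule `1 - q^{a+b} = (1 - q^a) + q^a (1 - q^b)`, divided by `(q)_a (q)_b`. -/
lemma qpochInv_pascal (a b : ℤ) :
    (1 - Xpow (a + b)) * (qpochInv a * qpochInv b) =
      qpochInv (a - 1) * qpochInv b + Xpow a * (qpochInv a * qpochInv (b - 1)) := by
  rcases lt_or_ge a 0 with ha | ha
  · simp [qpochInv_of_neg ha, qpochInv_of_neg (show a - 1 < 0 by omega)]
  rcases lt_or_ge b 0 with hb | hb
  · simp [qpochInv_of_neg hb, qpochInv_of_neg (show b - 1 < 0 by omega)]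
  rw [← one_sub_Xpow_mul_qpochInv a, ← one_sub_Xpow_mul_qpochInv b, Xpow_add ha hb]
  ring

lemma qpochInv_zero : qpochInv 0 = 1 := by
  simpa [qpoch, qpochA] using qpochInv_natCast 0

lemma one_sub_X_pow_ne_zero (n : ℕ) : (1 - X ^ (n + 1) : ℚ⟦X⟧) ≠ 0 := fun h => by
  simpa using congrArg constantCoeff h

lemma qpochInv_add_X_pow_mul_qpochInv (n : ℕ) :
    qpochInv n + X ^ (n + 1) * qpochInv (n + 1 : ℕ) = qpochInv (n + 1 : ℕ) := by
  have h := one_sub_Xpow_mul_qpochInv (n + 1 : ℕ)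
  rw [Xpow_natCast] at h
  push_cast at h ⊢
  rw [add_sub_cancel_right] at h
  rw [← h]; ring

lemma sum_X_pow_mul_Xpow_mul_qpochInv (L s : ℕ) :
    ∑ m ∈ range (L + 2), X ^ (m * (m + s)) * (Xpow ((L : ℤ) + 1 - m) *
        (qpochInv ((L : ℤ) + 1 - m) * qpochInv ((m : ℤ) - 1) * qpochInv ((m : ℤ) + s))) =
      X ^ (L + s + 1) * ∑ m ∈ range (L + 1), X ^ (m * (m + (s + 1))) *
        (qpochInv ((L : ℤ) - m) * qpochInv m * qpochInv ((m : ℤ) + (s + 1 : ℕ))) := by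
  rw [sum_range_succ', mul_sum]
  simp only [Nat.cast_zero, sub_zero, zero_sub, qpochInv_of_neg (show (-1 : ℤ) < 0 by omega),
    mul_zero, zero_mul, add_zero]
  refine sum_congr rfl fun j hj => ?_
  have hj : j ≤ L := by simpa [Nat.lt_succ_iff] using hj
  have hexp : (X : ℚ⟦X⟧) ^ (L + s + 1) * X ^ (j * (j + (s + 1))) =
      X ^ ((j + 1) * (j + 1 + s)) * X ^ (L - j) := by
    rw [← pow_add, ← pow_add]
    congr 1
    zify [hj]
    ring
  rw [show (L : ℤ) + 1 - (j + 1 : ℕ) = (L - j : ℕ) by omega, Xpow_natCast, Nat.cast_sub hj,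
    show ((j + 1 : ℕ) : ℤ) - 1 = j by push_cast; ring,
    show ((j + 1 : ℕ) : ℤ) + s = j + (s + 1 : ℕ) by push_cast; ring]
  linear_combination
    -(qpochInv ((L : ℤ) - j) * qpochInv (j : ℤ) * qpochInv ((j : ℤ) + (s + 1 : ℕ))) * hexp

/-- A terminating `q`-Chu–Vandermonde sum. -/
lemma sum_X_pow_mul_qpochInv (L s : ℕ) :
    ∑ m ∈ range (L + 1), X ^ (m * (m + s)) *
        (qpochInv ((L : ℤ) - m) * qpochInv m * qpochInv ((m : ℤ) + s)) =
      qpochInv L * qpochInv ((L : ℤ) + s) := by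
  induction L generalizing s with
  | zero => simp [qpochInv_zero]
  | succ L ih =>
    refine mul_left_cancel₀ (one_sub_X_pow_ne_zero L) ?_
    push_cast
    have hpascal : ∀ m ∈ range (L + 2), (1 - X ^ (L + 1)) * (X ^ (m * (m + s)) *
        (qpochInv ((L : ℤ) + 1 - m) * qpochInv m * qpochInv ((m : ℤ) + s))) =
        X ^ (m * (m + s)) * (qpochInv ((L : ℤ) - m) * qpochInv m * qpochInv ((m : ℤ) + s)) +
          X ^ (m * (m + s)) * (Xpow ((L : ℤ) + 1 - m) *
            (qpochInv ((L : ℤ) + 1 - m) * qpochInv ((m : ℤ) - 1) * qpochInv ((m : ℤ) + s))) := by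
      intro m _
      have h := qpochInv_pascal ((L : ℤ) + 1 - m) m
      rw [sub_add_cancel, show (L : ℤ) + 1 = (L + 1 : ℕ) by push_cast; ring, Xpow_natCast] at h
      push_cast at h
      rw [show (L : ℤ) + 1 - m - 1 = L - m by ring] at h
      linear_combination (X ^ (m * (m + s)) * qpochInv ((m : ℤ) + s)) * h
    have hfirst : ∑ m ∈ range (L + 2), X ^ (m * (m + s)) *
        (qpochInv ((L : ℤ) - m) * qpochInv m * qpochInv ((m : ℤ) + s)) =
        qpochInv L * qpochInv ((L : ℤ) + s) := by
      rw [sum_range_succ, ih, qpochInv_of_neg (n := (L : ℤ) - (L + 1 : ℕ)) (by omega)]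
      ring
    rw [mul_sum, sum_congr rfl hpascal, sum_add_distrib, hfirst, sum_X_pow_mul_Xpow_mul_qpochInv,
      ih (s + 1)]
    have h := qpochInv_add_X_pow_mul_qpochInv (L + s)
    have h' := one_sub_Xpow_mul_qpochInv (L + 1 : ℕ)
    rw [Xpow_natCast] at h'
    push_cast at h h' ⊢
    rw [add_sub_cancel_right] at h'
    rw [show (L : ℤ) + 1 + s = L + s + 1 by ring, show (L : ℤ) + (s + 1) = L + s + 1 by ring]
    linear_combination (qpochInv (L : ℤ)) * h - qpochInv ((L : ℤ) + s + 1) * h'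

noncomputable def baileyDenom (c M : ℕ) (r : ℤ) : ℚ⟦X⟧ :=
  qpochInv ((M : ℤ) - r) * qpochInv ((M : ℤ) + r + c)

lemma baileyDenom_neg_sub (c M : ℕ) (r : ℤ) : baileyDenom c M (-r - c) = baileyDenom c M r := by
  rw [baileyDenom, baileyDenom, mul_comm]
  ring_nf

lemma baileyDenom_eq_zero {c M : ℕ} {r : ℤ} (h : r ∉ Icc (-(M : ℤ) - c) M) :
    baileyDenom c M r = 0 := by
  rw [mem_Icc, not_and_or, not_le, not_le] at h
  rcases h with h | h
  · rw [baileyDenom, qpochInv_of_neg (n := (M : ℤ) + r + c) (by omega), mul_zero]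
  · rw [baileyDenom, qpochInv_of_neg (n := (M : ℤ) - r) (by omega), zero_mul]

lemma sum_X_pow_mul_baileyDenom_natCast (c M a : ℕ) :
    ∑ n ∈ range (M + 1), X ^ (n ^ 2 + c * n) * qpochInv ((M : ℤ) - n) * baileyDenom c n a =
      X ^ (a ^ 2 + c * a) * baileyDenom c M a := by
  rcases lt_or_ge M a with hMa | haM
  · rw [baileyDenom_eq_zero (by simp only [mem_Icc]; omega), mul_zero]
    refine sum_eq_zero fun n hn => ?_
    rw [baileyDenom_eq_zero (by simp only [mem_range, mem_Icc] at hn ⊢; omega), mul_zero]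
  obtain ⟨L, rfl⟩ := Nat.exists_eq_add_of_le haM
  rw [show a + L + 1 = a + (L + 1) by ring, sum_range_add,
    sum_eq_zero fun n hn => by
      rw [baileyDenom_eq_zero (by simp only [mem_range, mem_Icc] at hn ⊢; omega), mul_zero],
    zero_add]
  have hterm : ∀ m ∈ range (L + 1),
      X ^ ((a + m) ^ 2 + c * (a + m)) * qpochInv ((↑(a + L) : ℤ) - ↑(a + m)) *
        baileyDenom c (a + m) a =
      X ^ (a ^ 2 + c * a) * (X ^ (m * (m + (2 * a + c))) *
        (qpochInv ((L : ℤ) - m) * qpochInv m * qpochInv ((m : ℤ) + ↑(2 * a + c)))) := by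
    intro m _
    rw [baileyDenom, show (a + m) ^ 2 + c * (a + m) = a ^ 2 + c * a + m * (m + (2 * a + c)) by ring,
      pow_add]
    push_cast
    ring_nf
  rw [sum_congr rfl hterm, ← mul_sum, sum_X_pow_mul_qpochInv, baileyDenom]
  push_cast
  ring_nf

/-- The Bailey lemma for the pair whose `α` is concentrated at `r`. -/
lemma sum_X_pow_mul_baileyDenom {c : ℕ} (hc : c ≤ 1) (M : ℕ) (r : ℤ) :
    ∑ n ∈ range (M + 1), X ^ (n ^ 2 + c * n) * qpochInv ((M : ℤ) - n) * baileyDenom c n r =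
      Xpow (r ^ 2 + c * r) * baileyDenom c M r := by
  obtain ⟨a, rfl | hr⟩ : ∃ a : ℕ, r = a ∨ r = -a - c :=
    (le_or_gt 0 r).elim (fun h => ⟨r.toNat, .inl (by omega)⟩)
      (fun h => ⟨(-r - c).toNat, .inr (by omega)⟩)
  all_goals
    have hexp : ((a : ℤ) ^ 2 + c * a) = ((a ^ 2 + c * a : ℕ) : ℤ) := by push_cast; ring
  · rw [hexp, Xpow_natCast, sum_X_pow_mul_baileyDenom_natCast]
  · subst hr
    simp only [baileyDenom_neg_sub]
    rw [show (-(a : ℤ) - c) ^ 2 + c * (-a - c) = (a : ℤ) ^ 2 + c * a by ring, hexp, Xpow_natCast,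
      sum_X_pow_mul_baileyDenom_natCast]

lemma sum_mul_baileyDenom_of_subset {c M : ℕ} {s : Finset ℤ} (α : ℤ → ℚ⟦X⟧)
    (hs : Icc (-(M : ℤ) - c) M ⊆ s) :
    ∑ r ∈ s, α r * baileyDenom c M r = ∑ r ∈ Icc (-(M : ℤ) - c) M, α r * baileyDenom c M r :=
  (sum_subset hs fun r _ hr => by rw [baileyDenom_eq_zero hr, mul_zero]).symm

/-- Bailey pairs relative to `a = q^c`, up to normalisation; the classical sum over `0 ≤ r ≤ M`
is unfolded to `-M - c ≤ r ≤ M` by the symmetry `r ↦ -r - c` of `baileyDenom c M`. -/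
def IsBaileyPair (c : ℕ) (α : ℤ → ℚ⟦X⟧) (β : ℕ → ℚ⟦X⟧) : Prop :=
  ∀ M : ℕ, β M = ∑ r ∈ Icc (-(M : ℤ) - c) M, α r * baileyDenom c M r

lemma IsBaileyPair.bailey_lemma {c : ℕ} (hc : c ≤ 1) {α : ℤ → ℚ⟦X⟧} {β : ℕ → ℚ⟦X⟧}
    (h : IsBaileyPair c α β) :
    IsBaileyPair c (fun r => Xpow (r ^ 2 + c * r) * α r)
      (fun M => ∑ n ∈ range (M + 1), X ^ (n ^ 2 + c * n) * qpochInv ((M : ℤ) - n) * β n) := by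
  intro M
  have hinner : ∀ n ∈ range (M + 1), X ^ (n ^ 2 + c * n) * qpochInv ((M : ℤ) - n) * β n =
      ∑ r ∈ Icc (-(M : ℤ) - c) M,
        α r * (X ^ (n ^ 2 + c * n) * qpochInv ((M : ℤ) - n) * baileyDenom c n r) := by
    intro n hn
    have hsub : Icc (-(n : ℤ) - c) n ⊆ Icc (-(M : ℤ) - c) M := by
      intro r hr
      simp only [mem_Icc, mem_range] at hr hn ⊢
      omega
    rw [h n, ← sum_mul_baileyDenom_of_subset α hsub, mul_sum]
    exact sum_congr rfl fun r _ => by ring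
  simp only
  rw [sum_congr rfl hinner, sum_comm]
  refine sum_congr rfl fun r _ => ?_
  rw [← mul_sum, sum_X_pow_mul_baileyDenom hc]
  ring

lemma neg_one_zpow_neg (r : ℤ) : (-1 : ℚ) ^ (-r) = (-1) ^ r := by
  rw [zpow_neg, ← inv_zpow, inv_neg_one]

lemma neg_one_zpow_neg_sub_one (r : ℤ) : (-1 : ℚ) ^ (-r - 1) = -(-1) ^ r := by
  rw [zpow_sub₀ (by norm_num), zpow_neg, ← inv_zpow, inv_neg_one, zpow_one, div_neg, div_one]

def triangle (r : ℤ) : ℤ := r * (r + 1) / 2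

lemma two_mul_triangle (r : ℤ) : 2 * triangle r = r * (r + 1) :=
  Int.mul_ediv_cancel' (even_iff_two_dvd.mp (Int.even_mul_succ_self r))

lemma triangle_nonneg (r : ℤ) : 0 ≤ triangle r := by
  rcases le_or_gt 0 r with h | h <;> nlinarith [two_mul_triangle r]

lemma triangle_neg_sub_one (r : ℤ) : triangle (-r - 1) = triangle r := by
  linarith [two_mul_triangle r, two_mul_triangle (-r - 1)]

lemma triangle_neg (r : ℤ) : triangle (-r) = triangle r - r := by
  linarith [two_mul_triangle r, two_mul_triangle (-r)]

noncomputable def agAlpha (a b : ℕ) (r : ℤ) : ℚ⟦X⟧ :=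
  (-1 : ℚ) ^ r • Xpow (a * r ^ 2 + b * triangle r)

lemma agAlpha_exponent_nonneg (a b : ℕ) (r : ℤ) : 0 ≤ (a : ℤ) * r ^ 2 + b * triangle r := by
  have := triangle_nonneg r
  positivity

lemma Xpow_mul_agAlpha {e : ℤ} (he : 0 ≤ e) (a b : ℕ) (r : ℤ) :
    Xpow e * agAlpha a b r = (-1 : ℚ) ^ r • Xpow (a * r ^ 2 + b * triangle r + e) := by
  rw [agAlpha, mul_smul_comm, Xpow_add (agAlpha_exponent_nonneg a b r) he, mul_comm]

lemma Xpow_mul_agAlpha_one (a b : ℕ) (r : ℤ) :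
    Xpow (r ^ 2 + (1 : ℕ) * r) * agAlpha a b r = agAlpha a (b + 2) r := by
  rw [Xpow_mul_agAlpha (by push_cast; nlinarith [two_mul_triangle r, triangle_nonneg r]), agAlpha]
  congr 2
  push_cast
  linarith [two_mul_triangle r]

lemma Xpow_mul_agAlpha_zero (a b : ℕ) (r : ℤ) :
    Xpow (r ^ 2 + (0 : ℕ) * r) * agAlpha a b r = agAlpha (a + 1) b r := by
  rw [Xpow_mul_agAlpha (by simpa using sq_nonneg r), agAlpha]
  congr 2
  push_cast
  ring

lemma baileyDenom_one_neg_sub_one (M : ℕ) (r : ℤ) :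
    baileyDenom 1 M (-r - 1) = baileyDenom 1 M r := by
  simpa using baileyDenom_neg_sub 1 M r

lemma baileyDenom_zero_neg (M : ℕ) (r : ℤ) : baileyDenom 0 M (-r) = baileyDenom 0 M r := by
  simpa using baileyDenom_neg_sub 0 M r

lemma baileyDenom_one_eq (M : ℕ) (r : ℤ) :
    baileyDenom 1 M r = baileyDenom 0 M r + Xpow (M + r + 1) * baileyDenom 1 M r := by
  have h := one_sub_Xpow_mul_qpochInv ((M : ℤ) + r + 1)
  rw [add_sub_cancel_right] at h
  simp only [baileyDenom, Nat.cast_one, Nat.cast_zero, add_zero]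
  linear_combination qpochInv ((M : ℤ) - r) * h

/-- Passing from `a = q` to `a = 1`: the correction terms cancel in pairs `r ↔ -r - 1`. -/
lemma sum_agAlpha_mul_baileyDenom_one (b M : ℕ) :
    ∑ r ∈ Icc (-(M : ℤ) - 1) M, agAlpha 1 b r * baileyDenom 1 M r =
      ∑ r ∈ Icc (-(M : ℤ)) M, agAlpha 1 b r * baileyDenom 0 M r := by
  have hcancel : ∑ r ∈ Icc (-(M : ℤ) - 1) M,
      agAlpha 1 b r * (Xpow (M + r + 1) * baileyDenom 1 M r) = 0 := by
    refine sum_involution (fun r _ => -r - 1) (fun r hr => ?_) (fun r _ _ => by omega)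
      (fun r hr => by simp only [mem_Icc] at hr ⊢; omega) (fun r _ => by ring)
    simp only [mem_Icc] at hr
    rw [baileyDenom_one_neg_sub_one, ← mul_assoc, ← mul_assoc, mul_comm (agAlpha 1 b (-r - 1)),
      mul_comm (agAlpha 1 b r), Xpow_mul_agAlpha (by omega), Xpow_mul_agAlpha (by omega),
      neg_one_zpow_neg_sub_one, triangle_neg_sub_one,
      show (((1 : ℕ) : ℤ) * (-r - 1) ^ 2 + b * triangle r + (M + (-r - 1) + 1)) =
        ((1 : ℕ) : ℤ) * r ^ 2 + b * triangle r + (M + r + 1) by ring]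
    simp only [neg_smul, neg_mul, add_neg_cancel]
  rw [sum_congr rfl fun r _ => by rw [baileyDenom_one_eq M r, mul_add], sum_add_distrib, hcancel,
    add_zero]
  simpa using sum_mul_baileyDenom_of_subset (c := 0) (agAlpha 1 b)
    (s := Icc (-(M : ℤ) - 1) M) (fun r => by simp only [mem_Icc]; omega)

lemma baileyDenom_one_eq_succ (M : ℕ) (r : ℤ) :
    baileyDenom 1 M r = (1 - Xpow ((M : ℤ) + 1 - r)) * baileyDenom 0 (M + 1) r := by
  have h := one_sub_Xpow_mul_qpochInv ((M : ℤ) + 1 - r)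
  rw [show (M : ℤ) + 1 - r - 1 = M - r by ring] at h
  simp only [baileyDenom]
  push_cast
  rw [← h, show (M : ℤ) + r + 1 = M + 1 + r + 0 by ring]
  ring

/-- Reflecting `r ↦ -r` turns the factor `q^{M+1-r}` into `q^{M+1}`. -/
lemma sum_agAlpha_one_one_mul_baileyDenom_one (M : ℕ) :
    ∑ r ∈ Icc (-(M : ℤ) - 1) M, agAlpha 1 1 r * baileyDenom 1 M r =
      (1 - X ^ (M + 1)) *
        ∑ r ∈ Icc (-(M : ℤ) - 1) (M + 1), agAlpha 1 1 r * baileyDenom 0 (M + 1) r := by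
  have hext := sum_mul_baileyDenom_of_subset (c := 1) (M := M) (agAlpha 1 1)
    (s := Icc (-(M : ℤ) - 1) (M + 1)) (fun r => by simp only [mem_Icc]; omega)
  rw [Nat.cast_one] at hext
  have hreflect : ∑ r ∈ Icc (-(M : ℤ) - 1) (M + 1),
      agAlpha 1 1 r * (Xpow ((M : ℤ) + 1 - r) * baileyDenom 0 (M + 1) r) =
      X ^ (M + 1) * ∑ r ∈ Icc (-(M : ℤ) - 1) (M + 1), agAlpha 1 1 r * baileyDenom 0 (M + 1) r := by
    rw [mul_sum]
    refine sum_nbij' (fun r => -r) (fun r => -r) (fun r hr => by simp only [mem_Icc] at hr ⊢; omega)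
      (fun r hr => by simp only [mem_Icc] at hr ⊢; omega) (fun r _ => neg_neg r)
      (fun r _ => neg_neg r) (fun r hr => ?_)
    simp only [mem_Icc] at hr
    rw [baileyDenom_zero_neg, ← mul_assoc, ← mul_assoc, mul_comm (agAlpha 1 1 r),
      Xpow_mul_agAlpha (by omega), ← Xpow_natCast, Xpow_mul_agAlpha (by positivity),
      neg_one_zpow_neg, triangle_neg]
    congr 3
    push_cast
    ring
  rw [← hext, sub_mul, one_mul, ← hreflect, ← sum_sub_distrib]
  exact sum_congr rfl fun r _ => by rw [baileyDenom_one_eq_succ]; ring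

lemma isBaileyPair_agAlpha_one_one : IsBaileyPair 0 (agAlpha 1 1) (fun M => qpochInv M) := by
  intro M
  simp only [Nat.cast_zero, sub_zero]
  induction M with
  | zero => simp [agAlpha, baileyDenom, qpochInv_zero, Xpow, triangle]
  | succ M ih =>
    rw [← sum_agAlpha_mul_baileyDenom_one, sum_agAlpha_one_one_mul_baileyDenom_one] at ih
    have h := one_sub_Xpow_mul_qpochInv (M + 1 : ℕ)
    rw [Xpow_natCast, Nat.cast_succ, add_sub_cancel_right, ih] at h
    push_cast at h ⊢
    rw [neg_add']
    exact mul_left_cancel₀ (one_sub_X_pow_ne_zero M) h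

noncomputable def agChain (κ : ℕ) : ℕ → ℕ → ℚ⟦X⟧
  | 0, M => qpochInv M
  | t + 1, M => ∑ n ∈ range (M + 1),
      X ^ (n ^ 2 + (if t < κ then 1 else 0) * n) * qpochInv ((M : ℤ) - n) * agChain κ t n

lemma isBaileyPair_agChain_of_le {κ t : ℕ} (ht : t ≤ κ) :
    IsBaileyPair 1 (agAlpha 1 (2 * t + 1)) (agChain κ t) := by
  induction t with
  | zero =>
    intro M
    simp only [agChain, Nat.cast_one, mul_zero, zero_add]
    rw [sum_agAlpha_mul_baileyDenom_one]
    simpa using isBaileyPair_agAlpha_one_one M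
  | succ t ih =>
    have hstep := (ih (by omega)).bailey_lemma le_rfl
    simp only [Xpow_mul_agAlpha_one] at hstep
    intro M
    simpa [agChain, show t < κ by omega, Nat.mul_succ] using hstep M

lemma isBaileyPair_agChain_add (κ s : ℕ) :
    IsBaileyPair 0 (agAlpha (s + 1) (2 * κ + 1)) (agChain κ (κ + s)) := by
  induction s with
  | zero =>
    intro M
    simp only [add_zero, zero_add, Nat.cast_zero, sub_zero]
    rw [isBaileyPair_agChain_of_le le_rfl M, Nat.cast_one, sum_agAlpha_mul_baileyDenom_one]
  | succ s ih =>
    have hstep := ih.bailey_lemma zero_le_one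
    simp only [Xpow_mul_agAlpha_zero] at hstep
    intro M
    simpa [agChain, ← add_assoc] using hstep M

def natCons (n : ℕ) (g : ℕ → ℕ) : ℕ → ℕ
  | 0 => n
  | j + 1 => g j

@[simp] lemma natCons_zero (n : ℕ) (g : ℕ → ℕ) : natCons n g 0 = n := rfl

@[simp] lemma natCons_succ (n : ℕ) (g : ℕ → ℕ) (j : ℕ) : natCons n g (j + 1) = g j := rfl

lemma natCons_injective (n : ℕ) : Function.Injective (natCons n) :=
  fun _ _ h => funext fun j => congrFun h (j + 1)

open Classical in
noncomputable def antitoneTuples : ℕ → ℕ → Finset (ℕ → ℕ)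
  | 0, _ => {0}
  | t + 1, M => (range (M + 1)).biUnion fun n => (antitoneTuples t n).image (natCons n)

lemma mem_antitoneTuples {t M : ℕ} {g : ℕ → ℕ} :
    g ∈ antitoneTuples t M ↔ Antitone g ∧ (∀ j, t ≤ j → g j = 0) ∧ g 0 ≤ M := by
  induction t generalizing M g with
  | zero =>
    refine ⟨fun hg => ?_, fun ⟨_, hzero, _⟩ => ?_⟩
    · rw [antitoneTuples, mem_singleton] at hg
      subst hg
      exact ⟨antitone_const, fun _ _ => rfl, Nat.zero_le M⟩
    · rw [antitoneTuples, mem_singleton]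
      exact funext fun j => hzero j (Nat.zero_le j)
  | succ t ih =>
    simp only [antitoneTuples, mem_biUnion, mem_image, mem_range]
    constructor
    · rintro ⟨n, hn, h, hh, rfl⟩
      obtain ⟨hanti, hzero, hle⟩ := ih.1 hh
      refine ⟨antitone_nat_of_succ_le fun j => ?_, fun j hj => ?_, by rw [natCons_zero]; omega⟩
      · cases j with
        | zero => simpa using hle
        | succ j => simpa using hanti (Nat.le_succ j)
      · obtain ⟨j, rfl⟩ := Nat.exists_eq_add_of_le' (show 1 ≤ j by omega)
        exact hzero j (by omega)
    · rintro ⟨hanti, hzero, hle⟩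
      refine ⟨g 0, by omega, fun j => g (j + 1), ih.2 ⟨fun a b hab => hanti (by omega),
        fun j hj => hzero (j + 1) (by omega), hanti (Nat.zero_le 1)⟩, funext fun j => ?_⟩
      cases j <;> rfl

lemma finsum_eq_sum_antitoneTuples {β : Type*} [AddCommMonoid β] (t M : ℕ) (f : (ℕ → ℕ) → β) :
    ∑ᶠ (g : ℕ → ℕ) (_ : Antitone g ∧ (∀ j, t ≤ j → g j = 0) ∧ g 0 ≤ M), f g =
      ∑ g ∈ antitoneTuples t M, f g := by
  rw [← finsum_mem_coe_finset]
  exact finsum_congr fun g => by rw [Finset.mem_coe, mem_antitoneTuples]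

lemma sum_antitoneTuples_succ {β : Type*} [AddCommMonoid β] (t M : ℕ) (f : (ℕ → ℕ) → β) :
    ∑ g ∈ antitoneTuples (t + 1) M, f g =
      ∑ n ∈ range (M + 1), ∑ h ∈ antitoneTuples t n, f (natCons n h) := by
  classical
  rw [antitoneTuples, sum_biUnion]
  · exact sum_congr rfl fun n _ => sum_image fun _ _ _ _ h => natCons_injective n h
  · intro a _ b _ hab
    simp only [Function.onFun, disjoint_left, mem_image]
    rintro _ ⟨h, _, rfl⟩ ⟨h', _, he⟩
    exact hab (congrFun he 0).symm

def tupleExp (κ t : ℕ) (g : ℕ → ℕ) : ℕ :=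
  ∑ j ∈ range t, g j ^ 2 + ∑ j ∈ Ico (t - κ) t, g j

noncomputable def tupleWeight (t : ℕ) (g : ℕ → ℕ) : ℚ⟦X⟧ :=
  ∏ j ∈ range t, (qpoch (g j - g (j + 1)))⁻¹

lemma tupleExp_natCons (κ t n : ℕ) (h : ℕ → ℕ) :
    tupleExp κ (t + 1) (natCons n h) = n ^ 2 + (if t < κ then 1 else 0) * n + tupleExp κ t h := by
  have hlin : ∑ j ∈ Ico (t + 1 - κ) (t + 1), natCons n h j =
      (if t < κ then 1 else 0) * n + ∑ j ∈ Ico (t - κ) t, h j := by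
    split_ifs with htκ
    · rw [show t + 1 - κ = 0 by omega, show t - κ = 0 by omega, ← range_eq_Ico, ← range_eq_Ico,
        sum_range_succ']
      simp [add_comm]
    · rw [show t + 1 - κ = t - κ + 1 by omega, ← sum_Ico_add']
      simp
  rw [tupleExp, tupleExp, hlin, sum_range_succ']
  simp only [natCons_succ, natCons_zero]
  ring

lemma tupleWeight_natCons (t n : ℕ) (h : ℕ → ℕ) :
    tupleWeight (t + 1) (natCons n h) = (qpoch (n - h 0))⁻¹ * tupleWeight t h := by
  rw [tupleWeight, prod_range_succ', mul_comm]
  rfl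

lemma qpochInv_sub {m n : ℕ} (h : m ≤ n) : qpochInv ((n : ℤ) - m) = (qpoch (n - m))⁻¹ := by
  rw [← Nat.cast_sub h, qpochInv_natCast]

lemma agChain_eq_sum_antitoneTuples (κ t M : ℕ) :
    agChain κ t M = ∑ g ∈ antitoneTuples t M,
      X ^ tupleExp κ t g * qpochInv ((M : ℤ) - g 0) * tupleWeight t g := by
  induction t generalizing M with
  | zero => simp [agChain, antitoneTuples, tupleExp, tupleWeight]
  | succ t ih =>
    rw [agChain, sum_antitoneTuples_succ]
    refine sum_congr rfl fun n _ => ?_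
    rw [ih, mul_sum]
    refine sum_congr rfl fun h hh => ?_
    rw [tupleExp_natCons, tupleWeight_natCons, natCons_zero,
      qpochInv_sub (mem_antitoneTuples.1 hh).2.2, pow_add]
    ring

lemma le_tupleExp {κ t M : ℕ} {g : ℕ → ℕ} (hg : g ∈ antitoneTuples t M) : g 0 ≤ tupleExp κ t g := by
  rcases Nat.eq_zero_or_pos t with rfl | ht
  · simp [(mem_antitoneTuples.1 hg).2.1 0 le_rfl]
  · calc g 0 ≤ g 0 ^ 2 := Nat.le_self_pow two_ne_zero _
      _ ≤ ∑ j ∈ range t, g j ^ 2 :=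
        single_le_sum (f := fun j => g j ^ 2) (fun _ _ => Nat.zero_le _) (mem_range.2 ht)
      _ ≤ tupleExp κ t g := Nat.le_add_right _ _

section Truncation

variable {d : ℕ}

lemma coeff_eq_of_smodEq {A B : ℚ⟦X⟧} (h : A ≡ B [SMOD Ideal.span {(X : ℚ⟦X⟧) ^ (d + 1)}]) :
    coeff d A = coeff d B := by
  have := X_pow_dvd_iff.1 (Ideal.mem_span_singleton.1 (SModEq.sub_mem.1 h)) d (by omega)
  rwa [map_sub, sub_eq_zero] at this

lemma X_pow_smodEq_zero {n : ℕ} (h : d < n) :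
    (X : ℚ⟦X⟧) ^ n ≡ 0 [SMOD Ideal.span {(X : ℚ⟦X⟧) ^ (d + 1)}] :=
  SModEq.zero.2 (Ideal.mem_span_singleton.2 (pow_dvd_pow _ h))

lemma qpoch_smodEq {M : ℕ} (h : d ≤ M) :
    qpoch M ≡ qpoch d [SMOD Ideal.span {(X : ℚ⟦X⟧) ^ (d + 1)}] := by
  induction M, h using Nat.le_induction with
  | base => exact SModEq.rfl
  | succ M hM ih =>
    have := ih.mul ((SModEq.refl 1).sub (X_pow_smodEq_zero (show d < M + 1 by omega)))
    rwa [sub_zero, mul_one, ← qpoch_succ] at this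

lemma qpochInv_smodEq {n : ℤ} (h : (d : ℤ) ≤ n) :
    qpochInv n ≡ qpochInv d [SMOD Ideal.span {(X : ℚ⟦X⟧) ^ (d + 1)}] := by
  lift n to ℕ using (by omega)
  have := ((SModEq.refl (qpochInv n)).mul (qpoch_smodEq (show d ≤ n by omega)).symm).mul
    (SModEq.refl (qpochInv d))
  rwa [mul_assoc, qpoch_mul_qpochInv, mul_one, mul_comm (qpochInv n), qpoch_mul_qpochInv,
    one_mul] at this

lemma agAlpha_smodEq_zero {a b : ℕ} (ha : 1 ≤ a) {r : ℤ} (hr : d < |r|) :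
    agAlpha a b r ≡ 0 [SMOD Ideal.span {(X : ℚ⟦X⟧) ^ (d + 1)}] := by
  have hexp : (d : ℤ) < a * r ^ 2 + b * triangle r := by
    have h1 : |r| ≤ r ^ 2 := by rw [← sq_abs]; nlinarith
    have h2 : r ^ 2 ≤ a * r ^ 2 := le_mul_of_one_le_left (sq_nonneg r) (by exact_mod_cast ha)
    have h3 : 0 ≤ (b : ℤ) * triangle r := mul_nonneg (Nat.cast_nonneg b) (triangle_nonneg r)
    linarith
  have := (SModEq.refl (C ((-1 : ℚ) ^ r))).mul
    (X_pow_smodEq_zero (d := d) (n := (a * r ^ 2 + b * triangle r).toNat) (by omega))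
  rwa [mul_zero, ← smul_eq_C_mul] at this

lemma sum_agAlpha_smodEq (a b : ℕ) (ha : 1 ≤ a) {s : Finset ℤ} (hs : Icc (-(d : ℤ)) d ⊆ s) :
    ∑ r ∈ s, agAlpha a b r ≡ ∑ r ∈ Icc (-(d : ℤ)) d, agAlpha a b r
      [SMOD Ideal.span {(X : ℚ⟦X⟧) ^ (d + 1)}] := by
  classical
  rw [← sum_sdiff hs]
  have := (SModEq.sum (s := s \ Icc (-(d : ℤ)) d) fun r hr =>
    agAlpha_smodEq_zero (d := d) (b := b) (r := r) ha
      (by simp only [mem_sdiff, mem_Icc] at hr; rw [lt_abs]; omega)).add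
    (SModEq.refl (∑ r ∈ Icc (-(d : ℤ)) d, agAlpha a b r))
  rwa [sum_const_zero, zero_add] at this

lemma agChain_smodEq (κ t : ℕ) :
    agChain κ t (2 * d) ≡
      qpochInv d * ∑ g ∈ antitoneTuples t d, X ^ tupleExp κ t g * tupleWeight t g
      [SMOD Ideal.span {(X : ℚ⟦X⟧) ^ (d + 1)}] := by
  classical
  have hsub : antitoneTuples t d ⊆ antitoneTuples t (2 * d) := fun g hg => by
    obtain ⟨hanti, hzero, hle⟩ := mem_antitoneTuples.1 hg
    exact mem_antitoneTuples.2 ⟨hanti, hzero, by omega⟩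
  rw [agChain_eq_sum_antitoneTuples, ← sum_sdiff hsub, mul_sum]
  have hlarge : ∀ g ∈ antitoneTuples t (2 * d) \ antitoneTuples t d,
      X ^ tupleExp κ t g * qpochInv ((↑(2 * d) : ℤ) - g 0) * tupleWeight t g ≡ 0
        [SMOD Ideal.span {(X : ℚ⟦X⟧) ^ (d + 1)}] := fun g hg => by
    rw [mem_sdiff] at hg
    obtain ⟨hanti, hzero, -⟩ := mem_antitoneTuples.1 hg.1
    have hg0 : d < g 0 := by
      by_contra hle
      exact hg.2 (mem_antitoneTuples.2 ⟨hanti, hzero, by omega⟩)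
    have := ((X_pow_smodEq_zero (lt_of_lt_of_le hg0 (le_tupleExp (κ := κ) hg.1))).mul
      (SModEq.refl (qpochInv ((↑(2 * d) : ℤ) - g 0)))).mul (SModEq.refl (tupleWeight t g))
    rwa [zero_mul, zero_mul] at this
  have hsmall : ∀ g ∈ antitoneTuples t d,
      X ^ tupleExp κ t g * qpochInv ((↑(2 * d) : ℤ) - g 0) * tupleWeight t g ≡
        qpochInv d * (X ^ tupleExp κ t g * tupleWeight t g)
        [SMOD Ideal.span {(X : ℚ⟦X⟧) ^ (d + 1)}] := fun g hg => by
    have hg0 := (mem_antitoneTuples.1 hg).2.2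
    have := ((SModEq.refl (X ^ tupleExp κ t g)).mul
      (qpochInv_smodEq (show (d : ℤ) ≤ ↑(2 * d) - g 0 by omega))).mul
      (SModEq.refl (tupleWeight t g))
    rwa [mul_left_comm, ← mul_assoc]
  have := (SModEq.sum hlarge).add (SModEq.sum hsmall)
  rwa [sum_const_zero, zero_add] at this

lemma baileyDenom_zero_smodEq {M : ℕ} {r : ℤ} (h : d + |r| ≤ M) :
    baileyDenom 0 M r ≡ qpochInv d ^ 2 [SMOD Ideal.span {(X : ℚ⟦X⟧) ^ (d + 1)}] := by
  have hr := abs_le.1 (le_refl |r|)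
  rw [baileyDenom, sq]
  exact (qpochInv_smodEq (by omega)).mul (qpochInv_smodEq (by push_cast; omega))

lemma sum_agAlpha_mul_baileyDenom_smodEq (a b : ℕ) (ha : 1 ≤ a) :
    ∑ r ∈ Icc (-(↑(2 * d) : ℤ)) ↑(2 * d), agAlpha a b r * baileyDenom 0 (2 * d) r ≡
      qpochInv d ^ 2 * ∑ r ∈ Icc (-(d : ℤ)) d, agAlpha a b r
      [SMOD Ideal.span {(X : ℚ⟦X⟧) ^ (d + 1)}] := by
  have hterm : ∀ r ∈ Icc (-(↑(2 * d) : ℤ)) ↑(2 * d),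
      agAlpha a b r * baileyDenom 0 (2 * d) r ≡ qpochInv d ^ 2 * agAlpha a b r
        [SMOD Ideal.span {(X : ℚ⟦X⟧) ^ (d + 1)}] := fun r _ => by
    rw [mul_comm (qpochInv d ^ 2)]
    rcases le_or_gt |r| d with hr | hr
    · exact SModEq.rfl.mul (baileyDenom_zero_smodEq (by push_cast; omega))
    · have h0 := agAlpha_smodEq_zero (b := b) ha hr
      have hl := h0.mul (SModEq.refl (baileyDenom 0 (2 * d) r))
      have hr := h0.mul (SModEq.refl (qpochInv d ^ 2))
      rw [zero_mul] at hl hr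
      exact hl.trans hr.symm
  refine (SModEq.sum hterm).trans ?_
  rw [← mul_sum]
  exact SModEq.rfl.mul (sum_agAlpha_smodEq a b ha fun r hr => by
    simp only [mem_Icc] at hr ⊢; push_cast; omega)

lemma qpoch_mul_sum_antitoneTuples_smodEq (κ s : ℕ) :
    qpoch d * ∑ g ∈ antitoneTuples (κ + s) d, X ^ tupleExp κ (κ + s) g * tupleWeight (κ + s) g ≡
      ∑ r ∈ Icc (-(d : ℤ)) d, agAlpha (s + 1) (2 * κ + 1) r
      [SMOD Ideal.span {(X : ℚ⟦X⟧) ^ (d + 1)}] := by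
  have hchain : agChain κ (κ + s) (2 * d) ≡
      qpochInv d ^ 2 * ∑ r ∈ Icc (-(d : ℤ)) d, agAlpha (s + 1) (2 * κ + 1) r
      [SMOD Ideal.span {(X : ℚ⟦X⟧) ^ (d + 1)}] := by
    rw [isBaileyPair_agChain_add κ s (2 * d), Nat.cast_zero, sub_zero]
    exact sum_agAlpha_mul_baileyDenom_smodEq (s + 1) (2 * κ + 1) (Nat.le_add_left 1 s)
  have h := (SModEq.refl (qpoch d ^ 2)).mul ((agChain_smodEq κ (κ + s)).symm.trans hchain)
  set T := ∑ g ∈ antitoneTuples (κ + s) d, X ^ tupleExp κ (κ + s) g * tupleWeight (κ + s) g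
  set S := ∑ r ∈ Icc (-(d : ℤ)) d, agAlpha (s + 1) (2 * κ + 1) r
  have hu := qpoch_mul_qpochInv d
  rwa [show qpoch d ^ 2 * (qpochInv d * T) = qpoch d * T by linear_combination (qpoch d * T) * hu,
    show qpoch d ^ 2 * (qpochInv d ^ 2 * S) = S by
      linear_combination (qpoch d * qpochInv d + 1) * S * hu] at h

end Truncation

/-- Andrews–Gordon identities in alternating-sum (bosonic) form, coefficientwise:
`(1/(q)_∞) ∑_{r∈ℤ} (-1)^r q^{r((2k+1)r+2k-2i+1)/2}
  = ∑_{n₁ ≥ ⋯ ≥ n_{k-1} ≥ 0} q^{n₁²+⋯+n_{k-1}² + n_i+⋯+n_{k-1}} /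
      ((q)_{n₁-n₂} ⋯ (q)_{n_{k-2}-n_{k-1}} (q)_{n_{k-1}})`.
Both sides are multiplied by `(q)_∞` and the coefficient of `q^d` is taken; terms
with `|r| > d+1` or `n₁ > d`, and factors of `(q)_∞` beyond degree `d`, do not
contribute.  The tuple is encoded as `g : ℕ → ℕ` with `g j = n_{j+1}`, `g j = 0`
for `j ≥ k - 1`. -/
theorem andrews_gordon (k i : ℕ) (h1 : 1 ≤ i) (h2 : i ≤ k) (d : ℕ) :
    (∑ r ∈ Finset.Icc (-(d : ℤ) - 1) ((d : ℤ) + 1),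
        (-1 : ℚ) ^ r * (PowerSeries.coeff (R := ℚ) d)
          ((PowerSeries.X : PowerSeries ℚ) ^
            (r * ((2 * k + 1) * r + 2 * k - 2 * i + 1) / 2).toNat)) =
      (PowerSeries.coeff (R := ℚ) d)
        (qpoch d *
          ∑ᶠ (g : ℕ → ℕ) (_ : Antitone g ∧ (∀ j, k - 1 ≤ j → g j = 0) ∧ g 0 ≤ d),
            (PowerSeries.X : PowerSeries ℚ) ^
                (∑ j ∈ Finset.range (k - 1), (g j) ^ 2 +
                  ∑ j ∈ Finset.Ico (i - 1) (k - 1), g j) *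
              ∏ j ∈ Finset.range (k - 1), (qpoch (g j - g (j + 1)))⁻¹) := by
  obtain ⟨κ, s, rfl, rfl⟩ : ∃ κ s, k = κ + s + 1 ∧ i = s + 1 := ⟨k - i, i - 1, by omega, by omega⟩
  have hexp : ∀ r : ℤ, r * ((2 * ↑(κ + s + 1) + 1) * r + 2 * ↑(κ + s + 1) - 2 * ↑(s + 1) + 1) / 2 =
      ↑(s + 1) * r ^ 2 + ↑(2 * κ + 1) * triangle r := fun r =>
    Int.ediv_eq_of_eq_mul_left two_ne_zero (by
      push_cast
      linear_combination -(2 * κ + 1 : ℤ) * two_mul_triangle r)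
  have hcong := qpoch_mul_sum_antitoneTuples_smodEq (d := d) κ s
  simp only [tupleExp, tupleWeight, Nat.add_sub_cancel_left] at hcong
  simp only [Nat.add_sub_cancel, finsum_eq_sum_antitoneTuples]
  rw [coeff_eq_of_smodEq hcong,
    ← coeff_eq_of_smodEq (sum_agAlpha_smodEq (d := d) (s + 1) (2 * κ + 1) (Nat.le_add_left 1 s)
      (s := Icc (-(d : ℤ) - 1) (d + 1)) fun r => by simp only [mem_Icc]; omega), map_sum]
  refine sum_congr rfl fun r _ => ?_
  rw [hexp, agAlpha, map_smul, smul_eq_mul, Xpow]
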